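/- arXiv:2112.03165 — 3 statements merged into one kernel-verified Lean document; each statement's English description precedes it below -/
import Mathlib

section
/- Let 𝒢 be a sub-σ-algebra of 𝓕 and let G : H × H → L⁰(𝒢) be a bilinear mapping (in the P-a.s. sense: for all (u₁,v₁),(u₂,v₂) ∈ H × H and α₁,α₂ ∈ ℝ, G(α₁u₁+u₂, v₁) = α₁G(u₁,v₁) + G(u₂,v₁) P-a.s. and G(u₁, α₂v₁+v₂) = α₂G(u₁,v₁) + G(u₁,v₂) P-a.s.). Suppose there exists a nonnegative g ∈ L¹(𝒢) such that |G(u,v)| ≤ g ‖u‖_H ‖v‖_H P-a.s. for every (u,v) ∈ H × H. Then there exists a weakly 𝒢-measurable map Ḡ : Ω → 𝔏₂(H×H) with E[‖Ḡ‖_{𝔏₂(H×H)}] < ∞ such that Ḡ(u,v) = G(u,v) P-a.s. for every (u,v) ∈ H × H, and moreover ‖Ḡ‖_{𝔏₂(H×H)} ≤ g P-a.s. -/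
/-!
Fix a countable dense additive subgroup `D` of `H`. Since `D` is countable, the a.s. identities
(additivity in each argument, domination by `g`) hold simultaneously for all arguments in `D`
outside a single null set. There `G(ω)` is a biadditive form on `D` bounded by `g ω`, hence
Lipschitz in each argument; it extends by continuity to a bounded biadditive, hence bilinear,
form of norm `≤ g ω`. Weak measurability passes to the limit from `D`, and the norm is a countable
supremum. Finally `Ḡ(u, v) = G(u, v)` a.s.: running the same construction over the subgroup
generated by `D`, `u` and `v` yields a form that agrees with `Ḡ` on `D`, hence everywhere.
-/

open MeasureTheory

theorem Set.Countable.addSubgroup_closure {A : Type*} [AddCommGroup A] {s : Set A}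
    (hs : s.Countable) : (AddSubgroup.closure s : Set A).Countable := by
  have := hs.to_subtype
  have hspan : Countable (Submodule.span ℤ (Set.range ((↑) : s → A))) := inferInstance
  rw [Subtype.range_coe] at hspan
  rw [← Submodule.span_int_eq_addSubgroupClosure, Submodule.coe_toAddSubgroup]
  exact Set.countable_coe_iff.1 hspan

section Biadditive

variable {E E' F : Type*} [NormedAddCommGroup E] [NormedAddCommGroup E'] [NormedAddCommGroup F]

structure IsBoundedBiadditiveOn (B : E → E' → F) (D : Set E) (D' : Set E') (C : ℝ) : Prop where
  nonneg : 0 ≤ C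
  add_left : ∀ (x x' : D) (y : D'), B (x + x') y = B x y + B x' y
  add_right : ∀ (x : D) (y y' : D'), B x (y + y') = B x y + B x y'
  norm_le : ∀ (x : D) (y : D'), ‖B x y‖ ≤ C * ‖(x : E)‖ * ‖(y : E')‖

end Biadditive

section Extension

variable {E E' F : Type*} [NormedAddCommGroup E] [NormedSpace ℝ E]
  [NormedAddCommGroup E'] [NormedSpace ℝ E'] [NormedAddCommGroup F] [NormedSpace ℝ F]

theorem ContinuousLinearMap.ext_on_dense₂ {Φ Ψ : E →L[ℝ] E' →L[ℝ] F} {s : Set E} {t : Set E'}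
    (hs : Dense s) (ht : Dense t) (h : ∀ x ∈ s, ∀ y ∈ t, Φ x y = Ψ x y) : Φ = Ψ :=
  ext_on (hs.mono Submodule.subset_span) fun x hx =>
    ext_on (ht.mono Submodule.subset_span) fun y hy => h x hx y hy

variable [CompleteSpace F]

theorem AddMonoidHom.exists_extension_of_dense {D : AddSubgroup E} (hD : Dense (D : Set E))
    (f : D →+ F) {C : ℝ} (hC : 0 ≤ C) (hf : ∀ x : D, ‖f x‖ ≤ C * ‖(x : E)‖) :
    ∃ T : E →L[ℝ] F, (∀ x : D, T x = f x) ∧ ‖T‖ ≤ C := by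
  have hf_lip : LipschitzWith ⟨C, hC⟩ f := LipschitzWith.of_dist_le_mul fun x y =>
    show dist (f x) (f y) ≤ C * dist x y by simpa [dist_eq_norm, ← map_sub] using hf (x - y)
  have hind : IsUniformInducing ((↑) : D → E) := isUniformEmbedding_subtype_val.isUniformInducing
  have hdense : DenseRange ((↑) : D → E) := by simpa [DenseRange] using hD
  set T₀ := (hind.isDenseInducing hdense).extend f
  have hT₀_cont : Continuous T₀ :=
    (uniformContinuous_uniformly_extend hind hdense hf_lip.uniformContinuous).continuous
  have hT₀_eq : ∀ x : D, T₀ x = f x :=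
    uniformly_extend_of_ind hind hdense hf_lip.uniformContinuous
  have hT₀_add : ∀ x y, T₀ (x + y) = T₀ x + T₀ y := by
    suffices (fun p : E × E => T₀ (p.1 + p.2)) = fun p => T₀ p.1 + T₀ p.2 from
      fun x y => congrFun this (x, y)
    refine Continuous.ext_on (hD.prod hD) (by fun_prop) (by fun_prop) ?_
    rintro ⟨x, y⟩ ⟨hx, hy⟩
    have := hT₀_eq (⟨x, hx⟩ + ⟨y, hy⟩)
    rwa [map_add, ← hT₀_eq, ← hT₀_eq] at this
  let T := (AddMonoidHom.mk' T₀ hT₀_add).toRealLinearMap hT₀_cont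
  refine ⟨T, hT₀_eq, T.opNorm_le_bound hC fun x => ?_⟩
  have hclosed : IsClosed {x | ‖T₀ x‖ ≤ C * ‖x‖} :=
    isClosed_le hT₀_cont.norm (continuous_const.mul continuous_norm)
  refine hclosed.closure_subset_iff.2 (fun x hx => ?_) (hD x)
  simpa [hT₀_eq ⟨x, hx⟩] using hf ⟨x, hx⟩

namespace IsBoundedBiadditiveOn

variable {B : E → E' → F} {D : AddSubgroup E} {D' : AddSubgroup E'} {C : ℝ}

theorem exists_continuousLinearMap₂ (hB : IsBoundedBiadditiveOn B D D' C)
    (hD : Dense (D : Set E)) (hD' : Dense (D' : Set E')) :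
    ∃ Φ : E →L[ℝ] E' →L[ℝ] F, (∀ (x : D) (y : D'), Φ x y = B x y) ∧ ‖Φ‖ ≤ C := by
  have hrow : ∀ y : D', ∃ T : E →L[ℝ] F, (∀ x : D, T x = B x y) ∧ ‖T‖ ≤ C * ‖(y : E')‖ :=
    fun y => (AddMonoidHom.mk' (fun x : D => B x y) fun x x' => hB.add_left x x' y)
      |>.exists_extension_of_dense hD (mul_nonneg hB.nonneg (norm_nonneg _))
      fun x => by simpa [mul_right_comm] using hB.norm_le x y
  choose T hT_eq hT_norm using hrow
  have hT_add : ∀ y y' : D', T (y + y') = T y + T y' := fun y y' =>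
    ContinuousLinearMap.ext_on (hD.mono Submodule.subset_span) fun x hx => by
      rw [add_apply, hT_eq _ ⟨x, hx⟩, hT_eq _ ⟨x, hx⟩, hT_eq _ ⟨x, hx⟩]
      exact hB.add_right ⟨x, hx⟩ y y'
  obtain ⟨Ψ, hΨ_eq, hΨ_norm⟩ :=
    (AddMonoidHom.mk' T hT_add).exists_extension_of_dense hD' hB.nonneg hT_norm
  exact ⟨Ψ.flip, fun x y => by simp [hΨ_eq, hT_eq], by rwa [Ψ.opNorm_flip]⟩

theorem apply_eq_of_eqOn_dense (hB : IsBoundedBiadditiveOn B D D' C) {s : Set E} {t : Set E'}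
    (hs : Dense s) (ht : Dense t) (hsD : s ⊆ D) (htD' : t ⊆ D') {Φ : E →L[ℝ] E' →L[ℝ] F}
    (hΦ : ∀ x ∈ s, ∀ y ∈ t, Φ x y = B x y) (x : D) (y : D') : Φ x y = B x y := by
  obtain ⟨Ψ, hΨ_eq, -⟩ := hB.exists_continuousLinearMap₂ (hs.mono hsD) (ht.mono htD')
  have hΦΨ : Φ = Ψ := ContinuousLinearMap.ext_on_dense₂ hs ht fun x hx y hy =>
    (hΦ x hx y hy).trans (hΨ_eq ⟨x, hsD hx⟩ ⟨y, htD' hy⟩).symm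
  rw [hΦΨ, hΨ_eq]

end IsBoundedBiadditiveOn

end Extension

section Measurability

variable {Ω E E' F : Type*} {mΩ : MeasurableSpace Ω} [NormedAddCommGroup E] [NormedSpace ℝ E]
  [NormedAddCommGroup E'] [NormedSpace ℝ E'] [NormedAddCommGroup F] [NormedSpace ℝ F]

theorem Dense.closedBall_subset_closure_ball_inter {s : Set E} (hs : Dense s) (x : E) {r : ℝ}
    (hr : r ≠ 0) : Metric.closedBall x r ⊆ closure (Metric.ball x r ∩ s) := by
  rw [← closure_ball x hr]
  exact closure_minimal (hs.open_subset_closure_inter Metric.isOpen_ball) isClosed_closure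

theorem ContinuousLinearMap.norm_eq_iSup_of_closedBall_subset_closure
    (Φ : E →L[ℝ] E' →L[ℝ] F) {s : Set E} {t : Set E'} (hs₁ : s ⊆ Metric.ball 0 1)
    (hs : Metric.closedBall 0 1 ⊆ closure s) (ht₁ : t ⊆ Metric.ball 0 1)
    (ht : Metric.closedBall 0 1 ⊆ closure t) :
    ‖Φ‖ = ⨆ p : s × t, ‖Φ p.1 p.2‖ := by
  have : Nonempty s :=
    (closure_nonempty_iff.1 ⟨0, hs (Metric.mem_closedBall_self zero_le_one)⟩).to_subtype
  have : Nonempty t :=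
    (closure_nonempty_iff.1 ⟨0, ht (Metric.mem_closedBall_self zero_le_one)⟩).to_subtype
  have hle : ∀ p : s × t, ‖Φ p.1 p.2‖ ≤ ‖Φ‖ := fun ⟨⟨x, hx⟩, ⟨y, hy⟩⟩ => by
    have hx1 : ‖x‖ ≤ 1 := (mem_ball_zero_iff.1 (hs₁ hx)).le
    have hy1 : ‖y‖ ≤ 1 := (mem_ball_zero_iff.1 (ht₁ hy)).le
    calc ‖Φ x y‖ ≤ ‖Φ‖ * ‖x‖ * ‖y‖ := Φ.le_opNorm₂ x y
      _ ≤ ‖Φ‖ * 1 * 1 := by gcongr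
      _ = ‖Φ‖ := by ring
  have hbdd : BddAbove (Set.range fun p : s × t => ‖Φ p.1 p.2‖) := ⟨‖Φ‖, by
    rintro _ ⟨p, rfl⟩; exact hle p⟩
  set M := ⨆ p : s × t, ‖Φ p.1 p.2‖
  have hM : 0 ≤ M := (norm_nonneg _).trans (le_ciSup hbdd (Classical.arbitrary _))
  refine le_antisymm (opNorm_le_of_unit_norm hM fun x hx => opNorm_le_of_unit_norm hM
    fun y hy => ?_) (ciSup_le hle)
  have hclosed : IsClosed {p : E × E' | ‖Φ p.1 p.2‖ ≤ M} :=
    isClosed_le (Φ.continuous₂.comp continuous_id).norm continuous_const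
  have hxy : (x, y) ∈ closure (s ×ˢ t) := by
    rw [closure_prod_eq]
    exact ⟨hs (mem_closedBall_zero_iff.2 hx.le), ht (mem_closedBall_zero_iff.2 hy.le)⟩
  refine hclosed.closure_subset_iff.2 ?_ hxy
  rintro ⟨x, y⟩ ⟨hx, hy⟩
  exact le_ciSup hbdd (⟨x, hx⟩, ⟨y, hy⟩)

variable [MeasurableSpace F] [BorelSpace F]

theorem measurable_apply₂_of_dense {Φ : Ω → E →L[ℝ] E' →L[ℝ] F} {s : Set E} {t : Set E'}
    (hs : Dense s) (ht : Dense t) (hΦ : ∀ x ∈ s, ∀ y ∈ t, Measurable fun ω => Φ ω x y)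
    (u : E) (v : E') : Measurable fun ω => Φ ω u v := by
  obtain ⟨a, has, ha⟩ := mem_closure_iff_seq_limit.1 (hs u)
  obtain ⟨b, hbt, hb⟩ := mem_closure_iff_seq_limit.1 (ht v)
  exact measurable_of_tendsto_metrizable (fun n => hΦ _ (has n) _ (hbt n))
    (tendsto_pi_nhds.2 fun ω => ((Φ ω).continuous₂.tendsto (u, v)).comp (ha.prodMk_nhds hb))

theorem measurable_opNorm_of_measurable_apply₂ [TopologicalSpace.SeparableSpace E]
    [TopologicalSpace.SeparableSpace E'] {Φ : Ω → E →L[ℝ] E' →L[ℝ] F}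
    (hΦ : ∀ x y, Measurable fun ω => Φ ω x y) : Measurable fun ω => ‖Φ ω‖ := by
  obtain ⟨s, hsc, hsd⟩ := TopologicalSpace.exists_countable_dense E
  obtain ⟨t, htc, htd⟩ := TopologicalSpace.exists_countable_dense E'
  have := (hsc.mono (Set.inter_subset_right (s := Metric.ball 0 1))).to_subtype
  have := (htc.mono (Set.inter_subset_right (s := Metric.ball 0 1))).to_subtype
  simp_rw [fun ω => (Φ ω).norm_eq_iSup_of_closedBall_subset_closure
    Set.inter_subset_left (hsd.closedBall_subset_closure_ball_inter 0 one_ne_zero)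
    Set.inter_subset_left (htd.closedBall_subset_closure_ball_inter 0 one_ne_zero)]
  exact Measurable.iSup fun p => (hΦ _ _).norm

end Measurability

section RandomForm

variable {Ω E E' : Type*} {mΩ : MeasurableSpace Ω} [NormedAddCommGroup E] [NormedAddCommGroup E']
  {G : E → E' → Ω → ℝ} {g : Ω → ℝ}
  {D : Set E} {D' : Set E'}

theorem measurableSet_isBoundedBiadditiveOn (hD : D.Countable) (hD' : D'.Countable)
    (hG : ∀ x y, Measurable (G x y)) (hg : Measurable g) :
    MeasurableSet {ω | IsBoundedBiadditiveOn (fun x y => G x y ω) D D' (g ω)} := by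
  have := hD.to_subtype
  have := hD'.to_subtype
  have hiff : ∀ ω, IsBoundedBiadditiveOn (fun x y => G x y ω) D D' (g ω) ↔
      0 ≤ g ω ∧ (∀ (x x' : D) (y : D'), G (x + x') y ω = G x y ω + G x' y ω) ∧
      (∀ (x : D) (y y' : D'), G x (y + y') ω = G x y ω + G x y' ω) ∧
      ∀ (x : D) (y : D'), ‖G x y ω‖ ≤ g ω * ‖(x : E)‖ * ‖(y : E')‖ :=
    fun ω => ⟨fun h => ⟨h.1, h.2, h.3, h.4⟩, fun h => ⟨h.1, h.2.1, h.2.2.1, h.2.2.2⟩⟩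
  simp_rw [hiff]
  refine Measurable.setOf ?_
  fun_prop

theorem ae_isBoundedBiadditiveOn {μ : Measure Ω} (hD : D.Countable) (hD' : D'.Countable)
    (hg : ∀ᵐ ω ∂μ, 0 ≤ g ω)
    (hadd_left : ∀ x x' y, ∀ᵐ ω ∂μ, G (x + x') y ω = G x y ω + G x' y ω)
    (hadd_right : ∀ x y y', ∀ᵐ ω ∂μ, G x (y + y') ω = G x y ω + G x y' ω)
    (hdom : ∀ x y, ∀ᵐ ω ∂μ, |G x y ω| ≤ g ω * ‖x‖ * ‖y‖) :
    ∀ᵐ ω ∂μ, IsBoundedBiadditiveOn (fun x y => G x y ω) D D' (g ω) := by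
  have := hD.to_subtype
  have := hD'.to_subtype
  have h_left : ∀ᵐ ω ∂μ, ∀ (x x' : D) (y : D'), G (x + x') y ω = G x y ω + G x' y ω := by
    simp only [ae_all_iff]
    exact fun x x' y => hadd_left x x' y
  have h_right : ∀ᵐ ω ∂μ, ∀ (x : D) (y y' : D'), G x (y + y') ω = G x y ω + G x y' ω := by
    simp only [ae_all_iff]
    exact fun x y y' => hadd_right x y y'
  have h_dom : ∀ᵐ ω ∂μ, ∀ (x : D) (y : D'), |G x y ω| ≤ g ω * ‖(x : E)‖ * ‖(y : E')‖ := by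
    simp only [ae_all_iff]
    exact fun x y => hdom x y
  filter_upwards [hg, h_left, h_right, h_dom] with ω h₀ h₁ h₂ h₃
  exact ⟨h₀, h₁, h₂, h₃⟩

variable [NormedSpace ℝ E] [NormedSpace ℝ E']

theorem exists_measurable_apply₂_extension {D : AddSubgroup E} {D' : AddSubgroup E'}
    (hDc : (D : Set E).Countable) (hD'c : (D' : Set E').Countable) (hD : Dense (D : Set E))
    (hD' : Dense (D' : Set E')) (hG : ∀ x y, Measurable (G x y)) (hg : Measurable g) :
    ∃ Gb : Ω → E →L[ℝ] E' →L[ℝ] ℝ, (∀ u v, Measurable fun ω => Gb ω u v) ∧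
      ∀ ω, IsBoundedBiadditiveOn (fun x y => G x y ω) D D' (g ω) →
        (∀ (x : D) (y : D'), Gb ω x y = G x y ω) ∧ ‖Gb ω‖ ≤ g ω := by
  set S := {ω | IsBoundedBiadditiveOn (fun x y => G x y ω) D D' (g ω)}
  have hext : ∀ ω, ∃ Φ : E →L[ℝ] E' →L[ℝ] ℝ,
      (∀ (x : D) (y : D'), Φ x y = S.indicator (G x y) ω) ∧ ‖Φ‖ ≤ S.indicator g ω := by
    intro ω
    by_cases hω : ω ∈ S
    · simpa [hω] using IsBoundedBiadditiveOn.exists_continuousLinearMap₂ hω hD hD'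
    · exact ⟨0, fun _ _ => by simp [hω], by simp [hω, ContinuousLinearMap.opNorm_zero]⟩
  choose Gb hGb_eq hGb_norm using hext
  refine ⟨Gb, measurable_apply₂_of_dense hD hD' fun x hx y hy => ?_,
    fun ω hω => ⟨fun x y => by simpa [S, hω] using hGb_eq ω x y, by simpa [S, hω] using hGb_norm ω⟩⟩
  convert (hG x y).indicator (measurableSet_isBoundedBiadditiveOn hDc hD'c hG hg) using 1
  exact funext fun ω => hGb_eq ω ⟨x, hx⟩ ⟨y, hy⟩

end RandomForm

theorem aggregation_of_bilinear_random_form_general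
    {Ω H : Type*} [NormedAddCommGroup H] [InnerProductSpace ℝ H]
    [TopologicalSpace.SeparableSpace H]
    {m0 : MeasurableSpace Ω} (μ : Measure Ω)
    (m : MeasurableSpace Ω) (hm : m ≤ m0)
    (G : H → H → Ω → ℝ)
    (hGmeas : ∀ u v : H, Measurable[m] (G u v))
    (hlinL : ∀ (u₁ u₂ v : H) (c : ℝ),
      ∀ᵐ ω ∂μ, G (c • u₁ + u₂) v ω = c * G u₁ v ω + G u₂ v ω)
    (hlinR : ∀ (u v₁ v₂ : H) (c : ℝ),
      ∀ᵐ ω ∂μ, G u (c • v₁ + v₂) ω = c * G u v₁ ω + G u v₂ ω)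
    (g : Ω → ℝ) (hgmeas : Measurable[m] g) (hgint : Integrable g μ)
    (hg0 : ∀ᵐ ω ∂μ, 0 ≤ g ω)
    (hdom : ∀ u v : H, ∀ᵐ ω ∂μ, |G u v ω| ≤ g ω * ‖u‖ * ‖v‖) :
    ∃ Gb : Ω → H →L[ℝ] H →L[ℝ] ℝ,
      (∀ u v : H, Measurable[m] fun ω => Gb ω u v) ∧
      Integrable (fun ω => ‖Gb ω‖) μ ∧
      (∀ u v : H, (fun ω => Gb ω u v) =ᵐ[μ] G u v) ∧
      (∀ᵐ ω ∂μ, ‖Gb ω‖ ≤ g ω) := by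
  have hgood : ∀ D : Set H, D.Countable →
      ∀ᵐ ω ∂μ, IsBoundedBiadditiveOn (fun x y => G x y ω) D D (g ω) := fun D hD =>
    ae_isBoundedBiadditiveOn hD hD hg0 (fun x x' y => by simpa using hlinL x x' y 1)
      (fun x y y' => by simpa using hlinR x y y' 1) hdom
  obtain ⟨s, hsc, hsd⟩ := TopologicalSpace.exists_countable_dense H
  set D := AddSubgroup.closure s
  have hDc : (D : Set H).Countable := hsc.addSubgroup_closure
  have hDd : Dense (D : Set H) := hsd.mono AddSubgroup.subset_closure
  obtain ⟨Gb, hGb_meas, hGb⟩ := exists_measurable_apply₂_extension hDc hDc hDd hDd hGmeas hgmeas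
  have hGb_le : ∀ᵐ ω ∂μ, ‖Gb ω‖ ≤ g ω := (hgood D hDc).mono fun ω hω => (hGb ω hω).2
  refine ⟨Gb, hGb_meas, ?_, fun u v => ?_, hGb_le⟩
  · refine hgint.mono' ?_ (hGb_le.mono fun ω hω => (norm_norm (Gb ω)).trans_le hω)
    exact ((measurable_opNorm_of_measurable_apply₂ hGb_meas).mono hm le_rfl).aestronglyMeasurable
  · set D' := AddSubgroup.closure (insert u (insert v s))
    have hsD' : s ⊆ D' :=
      (Set.subset_insert _ _).trans (Set.subset_insert _ _) |>.trans AddSubgroup.subset_closure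
    filter_upwards [hgood D hDc, hgood D' (hsc.insert v |>.insert u).addSubgroup_closure]
      with ω hω hω'
    exact hω'.apply_eq_of_eqOn_dense hsd hsd hsD' hsD'
      (fun x hx y hy => (hGb ω hω).1 ⟨x, AddSubgroup.subset_closure hx⟩
        ⟨y, AddSubgroup.subset_closure hy⟩)
      ⟨u, AddSubgroup.subset_closure (Set.mem_insert _ _)⟩
      ⟨v, AddSubgroup.subset_closure (Set.mem_insert_of_mem _ (Set.mem_insert _ _))⟩

/-- **Aggregation of an a.s.-bilinear random form into a bounded bilinear-form
valued random variable** (Theorem 2.4 (i) of the paper, sufficiency direction).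
If `G : H × H → L⁰(𝒢)` is bilinear in the `P`-a.s. sense and dominated by a
nonnegative `g ∈ L¹(𝒢)` via `|G(u,v)| ≤ g ‖u‖ ‖v‖` a.s. for each `(u,v)`, then
there is a weakly `𝒢`-measurable map `Ḡ : Ω → 𝔏₂(H×H)` with integrable norm
such that `Ḡ(u,v) = G(u,v)` a.s. for every `(u,v)`, and `‖Ḡ‖ ≤ g` a.s. -/
theorem aggregation_of_bilinear_random_form
    {Ω H : Type*} [NormedAddCommGroup H] [InnerProductSpace ℝ H] [CompleteSpace H]
    [TopologicalSpace.SeparableSpace H]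
    {m0 : MeasurableSpace Ω} (μ : Measure Ω) [IsProbabilityMeasure μ]
    (m : MeasurableSpace Ω) (hm : m ≤ m0)
    (G : H → H → Ω → ℝ)
    (hGmeas : ∀ u v : H, Measurable[m] (G u v))
    (hlinL : ∀ (u₁ u₂ v : H) (c : ℝ),
      ∀ᵐ ω ∂μ, G (c • u₁ + u₂) v ω = c * G u₁ v ω + G u₂ v ω)
    (hlinR : ∀ (u v₁ v₂ : H) (c : ℝ),
      ∀ᵐ ω ∂μ, G u (c • v₁ + v₂) ω = c * G u v₁ ω + G u v₂ ω)
    (g : Ω → ℝ) (hgmeas : Measurable[m] g) (hgint : Integrable g μ)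
    (hg0 : ∀ᵐ ω ∂μ, 0 ≤ g ω)
    (hdom : ∀ u v : H, ∀ᵐ ω ∂μ, |G u v ω| ≤ g ω * ‖u‖ * ‖v‖) :
    ∃ Gb : Ω → H →L[ℝ] H →L[ℝ] ℝ,
      (∀ u v : H, Measurable[m] fun ω => Gb ω u v) ∧
      Integrable (fun ω => ‖Gb ω‖) μ ∧
      (∀ u v : H, (fun ω => Gb ω u v) =ᵐ[μ] G u v) ∧
      (∀ᵐ ω ∂μ, ‖Gb ω‖ ≤ g ω) :=
  aggregation_of_bilinear_random_form_general μ m hm G hGmeas hlinL hlinR g hgmeas hgint hg0 hdom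
end

section
/- Let J : H × H → H⁰(0,T) be a mapping that is bilinear in the P-a.s. sense at each time (for each t ∈ [0,T] and all (u₁,v₁),(u₂,v₂) ∈ H × H, α₁,α₂ ∈ ℝ: J_t(α₁u₁+u₂,v₁) = α₁J_t(u₁,v₁) + J_t(u₂,v₁) P-a.s. and J_t(u₁,α₂v₁+v₂) = α₂J_t(u₁,v₁) + J_t(u₁,v₂) P-a.s.). Suppose there exists h ∈ H⁰(0,T) with 0 ≤ h_t ∈ L¹(𝓕_t) for every t ∈ [0,T] and |J_t(u,v)| ≤ h_t ‖u‖_H ‖v‖_H P-a.s. for every t ∈ [0,T] and every (u,v) ∈ H × H. Then there exists an 𝔏₂(H×H)-valued weakly progressively measurable process J̄ such that for every t ∈ [0,T], J̄_t is weakly 𝓕_t-measurable with E[‖J̄_t‖_{𝔏₂(H×H)}] < ∞, J̄_t(u,v) = J_t(u,v) P-a.s. for every (u,v) ∈ H × H, and ‖J̄_t‖_{𝔏₂(H×H)} ≤ h_t P-a.s. Moreover, any two such weakly progressively measurable versions are modifications of each other. -/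
/-!
Fix a countable dense additive subgroup `S` of `H`. As `S` is countable, for each `t` almost every
`ω` makes `(x, y) ↦ J x y t ω` biadditive on `S × S` and bounded by `h t ω * ‖x‖ * ‖y‖`, and the
set of such `(t, ω)` is progressive. There this restriction extends, one variable at a time as a
Lipschitz additive map on a dense subgroup, to a bilinear form of norm at most `h t ω`; elsewhere
we put `0`. Its values are limits of values of `J` along sequences in `S`, hence progressive.
Adjoining any `u, v` to `S` shows that the extension is a version of `J`, and two continuous
bilinear forms agreeing on `S × S` coincide, which gives uniqueness.
-/

open MeasureTheory Set

section DenseBilinear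

variable {𝕜 E E' G : Type*} [NontriviallyNormedField 𝕜]
  [NormedAddCommGroup E] [NormedSpace 𝕜 E] [NormedAddCommGroup E'] [NormedSpace 𝕜 E']
  [NormedAddCommGroup G] [NormedSpace 𝕜 G]

theorem ContinuousLinearMap.ext_of_dense₂ {s : Set E} {s' : Set E'} (hs : Dense s)
    (hs' : Dense s') {F F' : E →L[𝕜] E' →L[𝕜] G} (h : ∀ x ∈ s, ∀ y ∈ s', F x y = F' x y) :
    F = F' :=
  ext_on (hs.mono Submodule.subset_span) fun x hx =>
    ext_on (hs'.mono Submodule.subset_span) (h x hx)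

theorem ContinuousLinearMap.opNorm_le_iff_of_dense₂ {s : Set E} {s' : Set E'} (hs : Dense s)
    (hs' : Dense s') (F : E →L[𝕜] E' →L[𝕜] G) {C : ℝ} :
    ‖F‖ ≤ C ↔ 0 ≤ C ∧ ∀ x ∈ s, ∀ y ∈ s', ‖F x y‖ ≤ C * ‖x‖ * ‖y‖ := by
  refine ⟨fun hF => ⟨(norm_nonneg F).trans hF, fun x _ y _ => ?_⟩, fun ⟨hC, hle⟩ => ?_⟩
  · calc ‖F x y‖ ≤ ‖F‖ * ‖x‖ * ‖y‖ := F.le_opNorm₂ x y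
      _ ≤ C * ‖x‖ * ‖y‖ := by gcongr
  · refine F.opNorm_le_bound₂ hC fun x y => ?_
    have hclosed : IsClosed {p : E × E' | ‖F p.1 p.2‖ ≤ C * ‖p.1‖ * ‖p.2‖} :=
      isClosed_le (by fun_prop) (by fun_prop)
    exact (hs.prod hs').induction (P := fun p => ‖F p.1 p.2‖ ≤ C * ‖p.1‖ * ‖p.2‖)
      (fun p hp => hle _ hp.1 _ hp.2) hclosed (x, y)

theorem measurable_norm_of_measurable_apply₂ [TopologicalSpace.SeparableSpace E]
    [TopologicalSpace.SeparableSpace E'] [MeasurableSpace G] [OpensMeasurableSpace G]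
    {α : Type*} [MeasurableSpace α] {F : α → E →L[𝕜] E' →L[𝕜] G}
    (hF : ∀ x y, Measurable fun a => F a x y) : Measurable fun a => ‖F a‖ := by
  obtain ⟨s, hsc, hs⟩ := TopologicalSpace.exists_countable_dense E
  obtain ⟨s', hsc', hs'⟩ := TopologicalSpace.exists_countable_dense E'
  refine measurable_of_Iic fun C => ?_
  have hset : (fun a => ‖F a‖) ⁻¹' Iic C =
      {_a | 0 ≤ C} ∩ ⋂ x ∈ s, ⋂ y ∈ s', {a | ‖F a x y‖ ≤ C * ‖x‖ * ‖y‖} := by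
    ext a
    simp [(F a).opNorm_le_iff_of_dense₂ hs hs']
  rw [hset]
  exact (MeasurableSet.const _).inter <| .biInter hsc fun x _ => .biInter hsc' fun y _ =>
    measurableSet_le (hF x y).norm measurable_const

end DenseBilinear

theorem Set.Countable.addSubgroupClosure {E : Type*} [AddCommGroup E] {s : Set E}
    (hs : s.Countable) : (AddSubgroup.closure s : Set E).Countable := by
  have := hs.to_subtype
  rw [← Subtype.range_coe (s := s), ← Submodule.span_int_eq_addSubgroupClosure]
  exact Set.countable_coe_iff.1 (inferInstance : Countable (Submodule.span ℤ (range ((↑) : s → E))))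

section Extension

variable {E E' G : Type*} [NormedAddCommGroup E] [NormedAddCommGroup E'] [NormedAddCommGroup G]

structure BoundedBiadditiveOn (S : Set E) (S' : Set E') (B : E → E' → G) (C : ℝ) : Prop where
  nonneg : 0 ≤ C
  add_left : ∀ x ∈ S, ∀ x' ∈ S, ∀ y ∈ S', B (x + x') y = B x y + B x' y
  add_right : ∀ x ∈ S, ∀ y ∈ S', ∀ y' ∈ S', B x (y + y') = B x y + B x y'
  norm_le : ∀ x ∈ S, ∀ y ∈ S', ‖B x y‖ ≤ C * ‖x‖ * ‖y‖

theorem BoundedBiadditiveOn.mono {S T : Set E} {S' T' : Set E'} {B : E → E' → G} {C : ℝ}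
    (hB : BoundedBiadditiveOn T T' B C) (hST : S ⊆ T) (hST' : S' ⊆ T') :
    BoundedBiadditiveOn S S' B C where
  nonneg := hB.nonneg
  add_left x hx x' hx' y hy := hB.add_left x (hST hx) x' (hST hx') y (hST' hy)
  add_right x hx y hy y' hy' := hB.add_right x (hST hx) y (hST' hy) y' (hST' hy')
  norm_le x hx y hy := hB.norm_le x (hST hx) y (hST' hy)

variable [NormedSpace ℝ E] [NormedSpace ℝ E'] [NormedSpace ℝ G] [CompleteSpace G]

theorem exists_continuousLinearMap_eqOn_of_dense {S : AddSubgroup E}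
    (hS : Dense (S : Set E)) {f : E → G} {C : ℝ} (hC : 0 ≤ C)
    (hadd : ∀ x ∈ S, ∀ y ∈ S, f (x + y) = f x + f y) (hf : ∀ x ∈ S, ‖f x‖ ≤ C * ‖x‖) :
    ∃ L : E →L[ℝ] G, ‖L‖ ≤ C ∧ EqOn L f S := by
  let f₀ : S →+ G := AddMonoidHom.mk' (fun x : S => f x) fun x y => hadd x x.2 y y.2
  have hf₀ : UniformContinuous f₀ :=
    (AddMonoidHomClass.lipschitz_of_bound f₀ C fun x : S => hf x x.2).uniformContinuous
  set ψ := hS.extend f₀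
  have hψ : Continuous ψ := (hS.uniformContinuous_extend hf₀).continuous
  have hψS : EqOn ψ f S := fun x hx => hS.extend_of_ind hf₀ ⟨x, hx⟩
  have hψadd : ∀ x y, ψ (x + y) = ψ x + ψ y := fun x y =>
    (hS.prod hS).induction (P := fun p : E × E => ψ (p.1 + p.2) = ψ p.1 + ψ p.2)
      (fun p ⟨hx, hy⟩ => by rw [hψS (S.add_mem hx hy), hψS hx, hψS hy, hadd _ hx _ hy])
      (isClosed_eq (by fun_prop) (by fun_prop)) (x, y)
  let L : E →L[ℝ] G := (AddMonoidHom.mk' ψ hψadd).toRealLinearMap hψ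
  refine ⟨L, L.opNorm_le_bound hC fun x => ?_, hψS⟩
  exact hS.induction (P := fun x => ‖ψ x‖ ≤ C * ‖x‖) (fun x hx => (hψS hx).symm ▸ hf x hx)
    (isClosed_le (by fun_prop) (by fun_prop)) x

theorem BoundedBiadditiveOn.exists_continuousLinearMap₂ {B : E → E' → G} {C : ℝ}
    {S : AddSubgroup E} {S' : AddSubgroup E'}
    (hS : Dense (S : Set E)) (hS' : Dense (S' : Set E')) (hB : BoundedBiadditiveOn S S' B C) :
    ∃ F : E →L[ℝ] E' →L[ℝ] G, ‖F‖ ≤ C ∧ ∀ x ∈ S, ∀ y ∈ S', F x y = B x y := by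
  have hrow : ∀ x, ∃ L : E' →L[ℝ] G, x ∈ S → ‖L‖ ≤ C * ‖x‖ ∧ EqOn L (B x) S' := by
    intro x
    by_cases hx : x ∈ S
    · obtain ⟨L, hL⟩ := exists_continuousLinearMap_eqOn_of_dense hS'
        (mul_nonneg hB.nonneg (norm_nonneg x)) (hB.add_right x hx) (hB.norm_le x hx)
      exact ⟨L, fun _ => hL⟩
    · exact ⟨0, fun hx' => (hx hx').elim⟩
  choose L hL using hrow
  have hLadd : ∀ x ∈ S, ∀ x' ∈ S, L (x + x') = L x + L x' := fun x hx x' hx' =>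
    ContinuousLinearMap.ext_on (hS'.mono Submodule.subset_span) fun y hy => by
      rw [add_apply, (hL _ (S.add_mem hx hx')).2 hy, (hL x hx).2 hy,
        (hL x' hx').2 hy, hB.add_left x hx x' hx' y hy]
  obtain ⟨F, hF, hFL⟩ := exists_continuousLinearMap_eqOn_of_dense hS hB.nonneg hLadd
    fun x hx => (hL x hx).1
  exact ⟨F, hF, fun x hx y hy => by rw [hFL hx, (hL x hx).2 hy]⟩

theorem BoundedBiadditiveOn.eq_of_eq_on_dense {B : E → E' → G} {C : ℝ} {S : Set E} {S' : Set E'}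
    {T : AddSubgroup E} {T' : AddSubgroup E'}
    (hB : BoundedBiadditiveOn T T' B C) (hS : Dense S) (hS' : Dense S') (hST : S ⊆ T)
    (hST' : S' ⊆ T') {F : E →L[ℝ] E' →L[ℝ] G} (hF : ∀ x ∈ S, ∀ y ∈ S', F x y = B x y) :
    ∀ x ∈ T, ∀ y ∈ T', F x y = B x y := by
  obtain ⟨F₁, -, hF₁⟩ := hB.exists_continuousLinearMap₂ (hS.mono hST) (hS'.mono hST')
  have hF₁F : F₁ = F := ContinuousLinearMap.ext_of_dense₂ hS hS' fun x hx y hy => by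
    rw [hF₁ x (hST hx) y (hST' hy), hF x hx y hy]
  exact hF₁F ▸ hF₁

end Extension

section Progressive

variable {E E' G : Type*} [NormedAddCommGroup E] [NormedAddCommGroup E'] [NormedAddCommGroup G]

theorem ae_boundedBiadditiveOn {Ω : Type*} {_ : MeasurableSpace Ω} {μ : Measure Ω} {S : Set E}
    {S' : Set E'} (hS : S.Countable) (hS' : S'.Countable) {B : E → E' → Ω → G} {c : Ω → ℝ}
    (hc : ∀ᵐ ω ∂μ, 0 ≤ c ω)
    (hadd_left : ∀ x x' y, ∀ᵐ ω ∂μ, B (x + x') y ω = B x y ω + B x' y ω)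
    (hadd_right : ∀ x y y', ∀ᵐ ω ∂μ, B x (y + y') ω = B x y ω + B x y' ω)
    (hle : ∀ x y, ∀ᵐ ω ∂μ, ‖B x y ω‖ ≤ c ω * ‖x‖ * ‖y‖) :
    ∀ᵐ ω ∂μ, BoundedBiadditiveOn S S' (fun x y => B x y ω) (c ω) := by
  have := hS.to_subtype
  have := hS'.to_subtype
  have h₁ : ∀ᵐ ω ∂μ, ∀ (x x' : S) (y : S'), B (x + x') y ω = B x y ω + B x' y ω := by
    simp only [ae_all_iff]; exact fun x x' y => hadd_left x x' y
  have h₂ : ∀ᵐ ω ∂μ, ∀ (x : S) (y y' : S'), B x (y + y') ω = B x y ω + B x y' ω := by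
    simp only [ae_all_iff]; exact fun x y y' => hadd_right x y y'
  have h₃ : ∀ᵐ ω ∂μ, ∀ (x : S) (y : S'), ‖B x y ω‖ ≤ c ω * ‖(x : E)‖ * ‖(y : E')‖ := by
    simp only [ae_all_iff]; exact fun x y => hle x y
  filter_upwards [hc, h₁, h₂, h₃] with ω h0 h1 h2 h3
  exact ⟨h0, fun x hx x' hx' y hy => h1 ⟨x, hx⟩ ⟨x', hx'⟩ ⟨y, hy⟩,
    fun x hx y hy y' hy' => h2 ⟨x, hx⟩ ⟨y, hy⟩ ⟨y', hy'⟩, fun x hx y hy => h3 ⟨x, hx⟩ ⟨y, hy⟩⟩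

theorem measurableSet_setOf_boundedBiadditiveOn {α : Type*} {_ : MeasurableSpace α} {S : Set E}
    {S' : Set E'} (hS : S.Countable) (hS' : S'.Countable) {B : α → E → E' → G} {c : α → ℝ}
    (hB : ∀ x y, StronglyMeasurable fun a => B a x y) (hc : StronglyMeasurable c) :
    MeasurableSet {a | BoundedBiadditiveOn S S' (B a) (c a)} := by
  have hset : {a | BoundedBiadditiveOn S S' (B a) (c a)} = {a | 0 ≤ c a} ∩
      ((⋂ x ∈ S, ⋂ x' ∈ S, ⋂ y ∈ S', {a | B a (x + x') y = B a x y + B a x' y}) ∩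
      ((⋂ x ∈ S, ⋂ y ∈ S', ⋂ y' ∈ S', {a | B a x (y + y') = B a x y + B a x y'}) ∩
      ⋂ x ∈ S, ⋂ y ∈ S', {a | ‖B a x y‖ ≤ c a * ‖x‖ * ‖y‖})) := by
    ext a
    simp only [mem_ofPred_eq, mem_inter_iff, mem_iInter]
    exact ⟨fun h => ⟨h.nonneg, h.add_left, h.add_right, h.norm_le⟩,
      fun ⟨h0, h1, h2, h3⟩ => ⟨h0, h1, h2, h3⟩⟩
  rw [hset]
  refine (stronglyMeasurable_const.measurableSet_le hc).inter (.inter ?_ (.inter ?_ ?_))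
  · exact .biInter hS fun x _ => .biInter hS fun x' _ => .biInter hS' fun y _ =>
      (hB _ _).measurableSet_eq_fun ((hB _ _).add (hB _ _))
  · exact .biInter hS fun x _ => .biInter hS' fun y _ => .biInter hS' fun y' _ =>
      (hB _ _).measurableSet_eq_fun ((hB _ _).add (hB _ _))
  · exact .biInter hS fun x _ => .biInter hS' fun y _ =>
      (hB _ _).norm.measurableSet_le ((hc.mul_const _).mul_const _)

variable {ι Ω : Type*} [Preorder ι] [MeasurableSpace ι] {m : MeasurableSpace Ω}
  {𝓕 : Filtration ι m} [NormedSpace ℝ E] [NormedSpace ℝ E'] [NormedSpace ℝ G] [CompleteSpace G]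

theorem exists_isStronglyProgressive_extension {S : AddSubgroup E} {S' : AddSubgroup E'}
    (hS : Dense (S : Set E)) (hS' : Dense (S' : Set E')) (hSc : (S : Set E).Countable)
    (hSc' : (S' : Set E').Countable) {J : E → E' → ι → Ω → G} {c : ι → Ω → ℝ}
    (hJ : ∀ x y, IsStronglyProgressive 𝓕 (J x y)) (hc : IsStronglyProgressive 𝓕 c) :
    ∃ Φ : ι → Ω → E →L[ℝ] E' →L[ℝ] G, (∀ u v, IsStronglyProgressive 𝓕 fun t ω => Φ t ω u v) ∧
      ∀ t ω, BoundedBiadditiveOn S S' (fun x y => J x y t ω) (c t ω) →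
        ‖Φ t ω‖ ≤ c t ω ∧ ∀ x ∈ S, ∀ y ∈ S', Φ t ω x y = J x y t ω := by
  classical
  set P : ι → Ω → Prop := fun t ω => BoundedBiadditiveOn S S' (fun x y => J x y t ω) (c t ω)
  have hext : ∀ t ω, ∃ F : E →L[ℝ] E' →L[ℝ] G,
      P t ω → ‖F‖ ≤ c t ω ∧ ∀ x ∈ S, ∀ y ∈ S', F x y = J x y t ω := fun t ω => by
    by_cases hP : P t ω
    · obtain ⟨F, hF⟩ := hP.exists_continuousLinearMap₂ hS hS'
      exact ⟨F, fun _ => hF⟩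
    · exact ⟨0, fun h => (hP h).elim⟩
  choose Φ hΦ using hext
  refine ⟨fun t ω => if P t ω then Φ t ω else 0, fun u v => ?_,
    fun t ω hP => by simp only [if_pos (show P t ω from hP)]; exact hΦ t ω hP⟩
  obtain ⟨a, haS, ha⟩ := mem_closure_iff_seq_limit.1 (hS u)
  obtain ⟨b, hbS, hb⟩ := mem_closure_iff_seq_limit.1 (hS' v)
  refine isStronglyProgressive_of_tendsto
    (U := fun n t ω => if P t ω then J (a n) (b n) t ω else 0) (fun n i => ?_) ?_
  · exact StronglyMeasurable.ite (measurableSet_setOf_boundedBiadditiveOn hSc hSc'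
      (fun x y => hJ x y i) (hc i)) (hJ _ _ i) stronglyMeasurable_const
  · refine tendsto_pi_nhds.2 fun t => tendsto_pi_nhds.2 fun ω => ?_
    by_cases hP : P t ω
    · simp only [hP, if_true]
      refine (((Φ t ω).continuous₂.tendsto (u, v)).comp (ha.prodMk_nhds hb)).congr fun n => ?_
      exact (hΦ t ω hP).2 _ (haS n) _ (hbS n)
    · simp only [hP, if_false]
      exact tendsto_const_nhds

end Progressive

theorem aggregation_of_bilinear_process_general
    {Ω H : Type*} [NormedAddCommGroup H] [InnerProductSpace ℝ H]
    [TopologicalSpace.SeparableSpace H]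
    {m0 : MeasurableSpace Ω} (μ : Measure Ω)
    (T : ℝ) (𝓕 : Filtration ℝ m0)
    (J : H → H → ℝ → Ω → ℝ)
    (hJprog : ∀ u v : H, ProgMeasurable 𝓕 (J u v))
    (hlinL : ∀ t ∈ Icc (0 : ℝ) T, ∀ (u₁ u₂ v : H) (c : ℝ),
      ∀ᵐ ω ∂μ, J (c • u₁ + u₂) v t ω = c * J u₁ v t ω + J u₂ v t ω)
    (hlinR : ∀ t ∈ Icc (0 : ℝ) T, ∀ (u v₁ v₂ : H) (c : ℝ),
      ∀ᵐ ω ∂μ, J u (c • v₁ + v₂) t ω = c * J u v₁ t ω + J u v₂ t ω)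
    (h : ℝ → Ω → ℝ) (hhprog : ProgMeasurable 𝓕 h)
    (hh0 : ∀ t ∈ Icc (0 : ℝ) T, ∀ᵐ ω ∂μ, 0 ≤ h t ω)
    (hhint : ∀ t ∈ Icc (0 : ℝ) T, Integrable (h t) μ)
    (hdom : ∀ t ∈ Icc (0 : ℝ) T, ∀ u v : H,
      ∀ᵐ ω ∂μ, |J u v t ω| ≤ h t ω * ‖u‖ * ‖v‖) :
    (∃ Jb : ℝ → Ω → H →L[ℝ] H →L[ℝ] ℝ,
      (∀ u v : H, ProgMeasurable 𝓕 fun t ω => Jb t ω u v) ∧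
      ∀ t ∈ Icc (0 : ℝ) T,
        (∀ u v : H, Measurable[𝓕 t] fun ω => Jb t ω u v) ∧
        Integrable (fun ω => ‖Jb t ω‖) μ ∧
        (∀ u v : H, (fun ω => Jb t ω u v) =ᵐ[μ] J u v t) ∧
        (∀ᵐ ω ∂μ, ‖Jb t ω‖ ≤ h t ω)) ∧
    (∀ Jb₁ Jb₂ : ℝ → Ω → H →L[ℝ] H →L[ℝ] ℝ,
      (∀ u v : H, ProgMeasurable 𝓕 fun t ω => Jb₁ t ω u v) →
      (∀ u v : H, ProgMeasurable 𝓕 fun t ω => Jb₂ t ω u v) →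
      (∀ t ∈ Icc (0 : ℝ) T, ∀ u v : H, (fun ω => Jb₁ t ω u v) =ᵐ[μ] J u v t) →
      (∀ t ∈ Icc (0 : ℝ) T, ∀ u v : H, (fun ω => Jb₂ t ω u v) =ᵐ[μ] J u v t) →
      ∀ t ∈ Icc (0 : ℝ) T, ∀ᵐ ω ∂μ, Jb₁ t ω = Jb₂ t ω) := by
  obtain ⟨d, hd⟩ := TopologicalSpace.exists_dense_seq H
  have hgood : ∀ t ∈ Icc (0 : ℝ) T, ∀ s : Set H, s.Countable →
      ∀ᵐ ω ∂μ, BoundedBiadditiveOn s s (fun x y => J x y t ω) (h t ω) := fun t ht s hs =>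
    ae_boundedBiadditiveOn hs hs (hh0 t ht) (fun x x' y => by simpa using hlinL t ht x x' y 1)
      (fun x y y' => by simpa using hlinR t ht x y y' 1) (hdom t ht)
  set S := AddSubgroup.closure (range d)
  have hS : Dense (S : Set H) := hd.mono AddSubgroup.subset_closure
  have hSc : (S : Set H).Countable := (countable_range d).addSubgroupClosure
  obtain ⟨Jb, hprog, hJb⟩ := exists_isStronglyProgressive_extension hS hS hSc hSc hJprog hhprog
  refine ⟨⟨Jb, hprog, fun t ht => ?_⟩, fun Jb₁ Jb₂ _ _ h₁ h₂ t ht => ?_⟩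
  · have hadapted : ∀ u v, Measurable[𝓕 t] fun ω => Jb t ω u v := fun u v =>
      ((hprog u v).stronglyAdapted t).measurable
    have hnorm : ∀ᵐ ω ∂μ, ‖Jb t ω‖ ≤ h t ω :=
      (hgood t ht S hSc).mono fun ω hω => (hJb t ω hω).1
    have hmeas : Measurable fun ω => ‖Jb t ω‖ :=
      measurable_norm_of_measurable_apply₂ fun u v => (hadapted u v).mono (𝓕.le t) le_rfl
    refine ⟨hadapted, (hhint t ht).mono' hmeas.aestronglyMeasurable ?_, fun u v => ?_, hnorm⟩
    · exact hnorm.mono fun ω hω => (Real.norm_of_nonneg (norm_nonneg (Jb t ω))).trans_le hω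
    -- adjoining `u` and `v` to `S` keeps it countable, so a.s. `J` is also bounded biadditive
    -- on the larger subgroup, where `Jb t ω` must agree with it
    set Suv := AddSubgroup.closure (insert u (insert v (range d)))
    have hSSuv : (S : Set H) ⊆ Suv :=
      AddSubgroup.closure_mono ((subset_insert v _).trans (subset_insert u _))
    filter_upwards [hgood t ht Suv
      (((countable_range d).insert v).insert u).addSubgroupClosure] with ω hω
    exact hω.eq_of_eq_on_dense hS hS hSSuv hSSuv (hJb t ω (hω.mono hSSuv hSSuv)).2 u
      (AddSubgroup.subset_closure (mem_insert u _)) v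
      (AddSubgroup.subset_closure (mem_insert_of_mem u (mem_insert v _)))
  · filter_upwards [(ae_ball_iff hSc).2 fun x _ => (ae_ball_iff hSc).2 fun y _ =>
      (h₁ t ht x y).trans (h₂ t ht x y).symm] with ω hω
    exact ContinuousLinearMap.ext_of_dense₂ hS hS hω

/-- **Aggregation of an a.s.-bilinear family of processes into a weakly
progressively measurable bilinear-form valued process** (Theorem 2.4 (ii) of the
paper, sufficiency direction, together with the uniqueness-up-to-modification
assertion). -/
theorem aggregation_of_bilinear_process
    {Ω H : Type*} [NormedAddCommGroup H] [InnerProductSpace ℝ H] [CompleteSpace H]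
    [TopologicalSpace.SeparableSpace H]
    {m0 : MeasurableSpace Ω} (μ : Measure Ω) [IsProbabilityMeasure μ]
    (T : ℝ) (hT : 0 < T) (𝓕 : Filtration ℝ m0)
    (J : H → H → ℝ → Ω → ℝ)
    (hJprog : ∀ u v : H, ProgMeasurable 𝓕 (J u v))
    (hlinL : ∀ t ∈ Icc (0 : ℝ) T, ∀ (u₁ u₂ v : H) (c : ℝ),
      ∀ᵐ ω ∂μ, J (c • u₁ + u₂) v t ω = c * J u₁ v t ω + J u₂ v t ω)
    (hlinR : ∀ t ∈ Icc (0 : ℝ) T, ∀ (u v₁ v₂ : H) (c : ℝ),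
      ∀ᵐ ω ∂μ, J u (c • v₁ + v₂) t ω = c * J u v₁ t ω + J u v₂ t ω)
    (h : ℝ → Ω → ℝ) (hhprog : ProgMeasurable 𝓕 h)
    (hh0 : ∀ t ∈ Icc (0 : ℝ) T, ∀ᵐ ω ∂μ, 0 ≤ h t ω)
    (hhint : ∀ t ∈ Icc (0 : ℝ) T, Integrable (h t) μ)
    (hdom : ∀ t ∈ Icc (0 : ℝ) T, ∀ u v : H,
      ∀ᵐ ω ∂μ, |J u v t ω| ≤ h t ω * ‖u‖ * ‖v‖) :
    (∃ Jb : ℝ → Ω → H →L[ℝ] H →L[ℝ] ℝ,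
      (∀ u v : H, ProgMeasurable 𝓕 fun t ω => Jb t ω u v) ∧
      ∀ t ∈ Icc (0 : ℝ) T,
        (∀ u v : H, Measurable[𝓕 t] fun ω => Jb t ω u v) ∧
        Integrable (fun ω => ‖Jb t ω‖) μ ∧
        (∀ u v : H, (fun ω => Jb t ω u v) =ᵐ[μ] J u v t) ∧
        (∀ᵐ ω ∂μ, ‖Jb t ω‖ ≤ h t ω)) ∧
    (∀ Jb₁ Jb₂ : ℝ → Ω → H →L[ℝ] H →L[ℝ] ℝ,
      (∀ u v : H, ProgMeasurable 𝓕 fun t ω => Jb₁ t ω u v) →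
      (∀ u v : H, ProgMeasurable 𝓕 fun t ω => Jb₂ t ω u v) →
      (∀ t ∈ Icc (0 : ℝ) T, ∀ u v : H, (fun ω => Jb₁ t ω u v) =ᵐ[μ] J u v t) →
      (∀ t ∈ Icc (0 : ℝ) T, ∀ u v : H, (fun ω => Jb₂ t ω u v) =ᵐ[μ] J u v t) →
      ∀ t ∈ Icc (0 : ℝ) T, ∀ᵐ ω ∂μ, Jb₁ t ω = Jb₂ t ω) :=
  aggregation_of_bilinear_process_general μ T 𝓕 J hJprog hlinL hlinR h hhprog hh0 hhint hdom
end

section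
/- Let (Y_t)_{0≤t≤T} be a weakly adapted 𝔏(H)-valued process such that for every t ∈ [0,T], Y_t is weakly 𝓕_t-measurable and E[‖Y_t‖_{𝔏(H)}] < ∞. Then (Y_t)_{0≤t≤T} has an 𝔏(H)-valued weakly progressively measurable modification Ȳ (i.e. Ȳ_t = Y_t P-a.s. for each t, where equality is in 𝔏(H)) if and only if for each (u,v) ∈ H × H the real-valued process (⟨Y_t u, v⟩)_{0≤t≤T} has a progressively measurable modification. -/
open MeasureTheory Set
open scoped RealInnerProductSpace

open Filter
open scoped Classical

section Aux
set_option linter.unusedSectionVars false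
variable {H : Type*} [NormedAddCommGroup H] [InnerProductSpace ℝ H] [CompleteSpace H]
variable {ι : Type*}

/-- norm squared of an orthonormal combination -/
lemma aux_norm_sum_sq {v : ι → H} (hv : Orthonormal ℝ v) (s : Finset ι) (l : ι → ℝ) :
    ‖∑ i ∈ s, l i • v i‖ ^ 2 = ∑ i ∈ s, (l i) ^ 2 := by
  have h := hv.inner_sum l l s
  simp only [starRingEnd_apply, star_trivial] at h
  rw [← real_inner_self_eq_norm_sq, h]
  exact Finset.sum_congr rfl fun i _ => (sq (l i)).symm

lemma aux_proj_le {v : ι → H} (hv : Orthonormal ℝ v) (s : Finset ι) (x : H) :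
    ‖∑ i ∈ s, ⟪v i, x⟫ • v i‖ ≤ ‖x‖ := by
  have h1 : ‖∑ i ∈ s, ⟪v i, x⟫ • v i‖ ^ 2 = ∑ i ∈ s, ⟪v i, x⟫ ^ 2 :=
    aux_norm_sum_sq hv s _
  have h2 : ∑ i ∈ s, ⟪v i, x⟫ ^ 2 ≤ ‖x‖ ^ 2 := by
    have := hv.sum_inner_products_le (s := s) x
    simpa [Real.norm_eq_abs, sq_abs] using this
  nlinarith [norm_nonneg (∑ i ∈ s, ⟪v i, x⟫ • v i), norm_nonneg x]

lemma aux_coef {v : ι → H} (hv : Orthonormal ℝ v) (s : Finset ι) (l : ι → ℝ) (i : ι) :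
    ⟪v i, ∑ k ∈ s, l k • v k⟫ = if i ∈ s then l i else 0 := by
  classical
  rw [inner_sum]
  have : ∀ k ∈ s, ⟪v i, l k • v k⟫ = if i = k then l k else 0 := by
    intro k _
    rw [real_inner_smul_right, orthonormal_iff_ite.mp hv i k]
    by_cases h : i = k <;> simp [h]
  rw [Finset.sum_congr rfl this, Finset.sum_ite_eq]

end Aux

section Aux2
set_option linter.unusedSectionVars false
variable {H : Type*} [NormedAddCommGroup H] [InnerProductSpace ℝ H] [CompleteSpace H]
variable {ι : Type*}

noncomputable def auxMatOp (b : HilbertBasis ι ℝ H) (g : ι → ι → ℝ) (F : Finset ι) :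
    H →L[ℝ] H :=
  ∑ i ∈ F, ∑ j ∈ F, g i j • ((innerSL ℝ (b i)).smulRight (b j))

lemma auxMatOp_apply (b : HilbertBasis ι ℝ H) (g : ι → ι → ℝ) (F : Finset ι) (u : H) :
    auxMatOp b g F u = ∑ i ∈ F, ∑ j ∈ F, (g i j * ⟪b i, u⟫) • b j := by
  simp [auxMatOp, ContinuousLinearMap.sum_apply, ContinuousLinearMap.smulRight_apply,
    innerSL_apply_apply, smul_smul]

lemma auxMatOp_inner (b : HilbertBasis ι ℝ H) (g : ι → ι → ℝ) (F : Finset ι) (u v : H) :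
    ⟪auxMatOp b g F u, v⟫ = ∑ i ∈ F, ∑ j ∈ F, g i j * ⟪b i, u⟫ * ⟪b j, v⟫ := by
  rw [auxMatOp_apply, sum_inner]
  refine Finset.sum_congr rfl fun i _ => ?_
  rw [sum_inner]
  refine Finset.sum_congr rfl fun j _ => ?_
  rw [real_inner_smul_left]

/-- partial sums of the matrix expansion converge to `⟪B u, v⟫`. -/
lemma aux_tendsto (b : HilbertBasis ι ℝ H) (B : H →L[ℝ] H) (u v : H) :
    Filter.Tendsto
      (fun F : Finset ι => ∑ i ∈ F, ∑ j ∈ F, ⟪b i, u⟫ * ⟪b j, v⟫ * ⟪B (b i), b j⟫)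
      Filter.atTop (nhds ⟪B u, v⟫) := by
  have hu : Filter.Tendsto (fun F : Finset ι => ∑ i ∈ F, ⟪b i, u⟫ • b i)
      Filter.atTop (nhds u) := by
    have := b.hasSum_repr u
    simp only [HilbertBasis.repr_apply_apply] at this
    exact this
  have hv : Filter.Tendsto (fun F : Finset ι => ∑ j ∈ F, ⟪b j, v⟫ • b j)
      Filter.atTop (nhds v) := by
    have := b.hasSum_repr v
    simp only [HilbertBasis.repr_apply_apply] at this
    exact this
  have hBu : Filter.Tendsto (fun F : Finset ι => B (∑ i ∈ F, ⟪b i, u⟫ • b i))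
      Filter.atTop (nhds (B u)) := (B.continuous.tendsto u).comp hu
  have key := hBu.inner (𝕜 := ℝ) hv
  refine key.congr fun F => ?_
  rw [map_sum, sum_inner]
  refine Finset.sum_congr rfl fun i _ => ?_
  rw [B.map_smul, real_inner_smul_left, inner_sum]
  rw [Finset.mul_sum]
  refine Finset.sum_congr rfl fun j _ => ?_
  rw [real_inner_smul_right]; ring

/-- uniqueness: operators with the same matrix coincide -/
lemma aux_unique (b : HilbertBasis ι ℝ H) (B B' : H →L[ℝ] H)
    (h : ∀ i j, ⟪B (b i), b j⟫ = ⟪B' (b i), b j⟫) : B = B' := by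
  have hall : ∀ u v : H, ⟪B u, v⟫ = ⟪B' u, v⟫ := by
    intro u v
    refine tendsto_nhds_unique ?_ (aux_tendsto b B' u v)
    have := aux_tendsto b B u v
    refine this.congr fun F => ?_
    exact Finset.sum_congr rfl fun i _ => Finset.sum_congr rfl fun j _ => by rw [h i j]
  ext u
  exact ext_inner_right ℝ fun v => hall u v
end Aux2

section Aux3
set_option linter.unusedSectionVars false
variable {H : Type*} [NormedAddCommGroup H] [InnerProductSpace ℝ H] [CompleteSpace H]
variable {ι : Type*}

/-- norm bound on partial matrix operators from an actual operator -/
lemma aux_matOp_norm_le (b : HilbertBasis ι ℝ H) (B : H →L[ℝ] H) (F : Finset ι) :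
    ‖auxMatOp b (fun i j => ⟪B (b i), b j⟫) F‖ ≤ ‖B‖ := by
  refine ContinuousLinearMap.opNorm_le_bound _ (norm_nonneg B) fun u => ?_
  set g : ι → ι → ℝ := fun i j => ⟪B (b i), b j⟫
  set x : H := B (∑ i ∈ F, ⟪b i, u⟫ • b i) with hx
  have hkey : auxMatOp b g F u = ∑ j ∈ F, ⟪b j, x⟫ • b j := by
    rw [auxMatOp_apply, Finset.sum_comm]
    refine Finset.sum_congr rfl fun j _ => ?_
    rw [hx, map_sum, inner_sum, ← Finset.sum_smul]
    congr 1
    refine Finset.sum_congr rfl fun i _ => ?_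
    rw [B.map_smul, real_inner_smul_right]
    simp only [g]
    rw [real_inner_comm (b j) (B (b i))]
    ring
  rw [hkey]
  calc ‖∑ j ∈ F, ⟪b j, x⟫ • b j‖ ≤ ‖x‖ := aux_proj_le b.orthonormal F x
    _ ≤ ‖B‖ * ‖∑ i ∈ F, ⟪b i, u⟫ • b i‖ := B.le_opNorm _
    _ ≤ ‖B‖ * ‖u‖ :=
      mul_le_mul_of_nonneg_left (aux_proj_le b.orthonormal F u) (norm_nonneg B)

/-- the bilinear bound from uniform bounds on the partial matrix operators -/
lemma aux_bil (b : HilbertBasis ι ℝ H) (g : ι → ι → ℝ) (c : ℝ)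
    (hc : ∀ F : Finset ι, ‖auxMatOp b g F‖ ≤ c) (F G : Finset ι) (a β : ι → ℝ) :
    |∑ i ∈ F, ∑ j ∈ G, a i * β j * g i j| ≤
      c * ‖∑ i ∈ F, a i • b i‖ * ‖∑ j ∈ G, β j • b j‖ := by
  set K := F ∪ G with hK
  set u : H := ∑ i ∈ F, a i • b i with hu
  set v : H := ∑ j ∈ G, β j • b j with hv
  have hFK : F ⊆ K := Finset.subset_union_left
  have hGK : G ⊆ K := Finset.subset_union_right
  have h1 : ⟪auxMatOp b g K u, v⟫ = ∑ i ∈ F, ∑ j ∈ G, a i * β j * g i j := by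
    rw [auxMatOp_inner]
    have step1 : ∀ i ∈ K, ∀ j ∈ K, g i j * ⟪b i, u⟫ * ⟪b j, v⟫
        = (if i ∈ F then a i else 0) * ((if j ∈ G then β j else 0) * g i j) := by
      intro i _ j _
      rw [hu, hv, aux_coef b.orthonormal F a i, aux_coef b.orthonormal G β j]
      ring
    rw [Finset.sum_congr rfl fun i hi => Finset.sum_congr rfl fun j hj => step1 i hi j hj]
    rw [← Finset.sum_subset hFK (fun x _ hnx => by simp [hnx])]
    refine Finset.sum_congr rfl fun i hi => ?_
    rw [← Finset.sum_subset hGK (fun x _ hnx => by simp [hnx])]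
    exact Finset.sum_congr rfl fun j hj => by simp [hi, hj]; ring
  rw [← h1]
  calc |⟪auxMatOp b g K u, v⟫| ≤ ‖auxMatOp b g K u‖ * ‖v‖ := abs_real_inner_le_norm _ _
    _ ≤ (‖auxMatOp b g K‖ * ‖u‖) * ‖v‖ :=
        mul_le_mul_of_nonneg_right ((auxMatOp b g K).le_opNorm u) (norm_nonneg v)
    _ ≤ (c * ‖u‖) * ‖v‖ :=
        mul_le_mul_of_nonneg_right
          (mul_le_mul_of_nonneg_right (hc K) (norm_nonneg u)) (norm_nonneg v)
    _ = c * ‖u‖ * ‖v‖ := by ring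
end Aux3

section Aux4
set_option linter.unusedSectionVars false
variable {H : Type*} [NormedAddCommGroup H] [InnerProductSpace ℝ H] [CompleteSpace H]
variable {ι : Type*}

/-- Main construction: a uniformly bounded matrix yields a bounded operator. -/
lemma aux_construct (b : HilbertBasis ι ℝ H) (g : ι → ι → ℝ) (c : ℕ)
    (hc : ∀ F : Finset ι, ‖auxMatOp b g F‖ ≤ (c : ℝ)) :
    ∃ B : H →L[ℝ] H, ∀ i j, ⟪B (b i), b j⟫ = g i j := by
  set S : H → H → Finset ι → ℝ :=
    fun u v F => ∑ i ∈ F, ∑ j ∈ F, ⟪b i, u⟫ * ⟪b j, v⟫ * g i j with hSdef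
  -- Cauchy property
  have hcauchy : ∀ u v : H, CauchySeq (S u v) := by
    intro u v
    rw [Metric.cauchySeq_iff]
    intro ε hε
    set δ : ℝ := ε / (2 * (c + 1) * (‖u‖ + ‖v‖ + 1)) with hδdef
    have hδ : 0 < δ := by positivity
    have ha2 : Summable fun i => ⟪b i, u⟫ ^ 2 := by
      have := b.orthonormal.inner_products_summable u
      simpa [Real.norm_eq_abs, sq_abs] using this
    have hb2 : Summable fun j => ⟪b j, v⟫ ^ 2 := by
      have := b.orthonormal.inner_products_summable v
      simpa [Real.norm_eq_abs, sq_abs] using this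
    obtain ⟨Na, hNa⟩ := summable_iff_vanishing.mp ha2 (Metric.ball 0 (δ ^ 2))
      (Metric.ball_mem_nhds 0 (by positivity))
    obtain ⟨Nb, hNb⟩ := summable_iff_vanishing.mp hb2 (Metric.ball 0 (δ ^ 2))
      (Metric.ball_mem_nhds 0 (by positivity))
    set N : Finset ι := Na ∪ Nb with hN
    have hsmall_a : ∀ t : Finset ι, Disjoint t N → ‖∑ i ∈ t, ⟪b i, u⟫ • b i‖ ≤ δ := by
      intro t ht
      have h1 := hNa t (ht.mono_right (Finset.subset_union_left : Na ⊆ N))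
      have h2 : |∑ i ∈ t, ⟪b i, u⟫ ^ 2| < δ ^ 2 := by
        simpa [Real.dist_eq] using h1
      have h3 : ‖∑ i ∈ t, ⟪b i, u⟫ • b i‖ ^ 2 = ∑ i ∈ t, ⟪b i, u⟫ ^ 2 :=
        aux_norm_sum_sq b.orthonormal t _
      nlinarith [norm_nonneg (∑ i ∈ t, ⟪b i, u⟫ • b i),
        le_abs_self (∑ i ∈ t, ⟪b i, u⟫ ^ 2), hδ]
    have hsmall_b : ∀ t : Finset ι, Disjoint t N → ‖∑ j ∈ t, ⟪b j, v⟫ • b j‖ ≤ δ := by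
      intro t ht
      have h1 := hNb t (ht.mono_right (Finset.subset_union_right : Nb ⊆ N))
      have h2 : |∑ j ∈ t, ⟪b j, v⟫ ^ 2| < δ ^ 2 := by
        simpa [Real.dist_eq] using h1
      have h3 : ‖∑ j ∈ t, ⟪b j, v⟫ • b j‖ ^ 2 = ∑ j ∈ t, ⟪b j, v⟫ ^ 2 :=
        aux_norm_sum_sq b.orthonormal t _
      nlinarith [norm_nonneg (∑ j ∈ t, ⟪b j, v⟫ • b j),
        le_abs_self (∑ j ∈ t, ⟪b j, v⟫ ^ 2), hδ]
    have hbil := aux_bil b g (c : ℝ) hc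
    -- nested estimate
    have hnest : ∀ F K : Finset ι, N ⊆ F → F ⊆ K → |S u v K - S u v F| < ε / 2 := by
      intro F K hNF hFK
      set X : ι → ι → ℝ := fun i j => ⟪b i, u⟫ * ⟪b j, v⟫ * g i j with hX
      have e1 : S u v K = (∑ i ∈ K \ F, ∑ j ∈ K, X i j) + ∑ i ∈ F, ∑ j ∈ K, X i j :=
        (Finset.sum_sdiff hFK).symm
      have e2 : ∀ i : ι, (∑ j ∈ K, X i j) = (∑ j ∈ K \ F, X i j) + ∑ j ∈ F, X i j :=
        fun i => (Finset.sum_sdiff hFK).symm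
      have e3 : ∑ i ∈ F, ∑ j ∈ K, X i j
          = (∑ i ∈ F, ∑ j ∈ K \ F, X i j) + ∑ i ∈ F, ∑ j ∈ F, X i j := by
        rw [← Finset.sum_add_distrib]
        exact Finset.sum_congr rfl fun i _ => e2 i
      have hSF : S u v F = ∑ i ∈ F, ∑ j ∈ F, X i j := rfl
      have hid : S u v K - S u v F
          = (∑ i ∈ K \ F, ∑ j ∈ K, X i j) + ∑ i ∈ F, ∑ j ∈ K \ F, X i j := by
        rw [e1, e3, hSF]; ring
      have hdisj : Disjoint (K \ F) N :=
        (Finset.sdiff_disjoint : Disjoint (K \ F) F).mono_right hNF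
      have hA : |∑ i ∈ K \ F, ∑ j ∈ K, X i j| ≤ (c : ℝ) * δ * ‖v‖ := by
        refine (hbil (K \ F) K (fun i => ⟪b i, u⟫) (fun j => ⟪b j, v⟫)).trans ?_
        have hx1 := hsmall_a (K \ F) hdisj
        have hx2 := aux_proj_le b.orthonormal K v
        have hc0 : (0:ℝ) ≤ c := Nat.cast_nonneg c
        have h' : (c:ℝ) * ‖∑ i ∈ K \ F, ⟪b i, u⟫ • b i‖ ≤ (c:ℝ) * δ :=
          mul_le_mul_of_nonneg_left hx1 hc0
        exact mul_le_mul h' hx2 (norm_nonneg _) (by positivity)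
      have hB : |∑ i ∈ F, ∑ j ∈ K \ F, X i j| ≤ (c : ℝ) * ‖u‖ * δ := by
        refine (hbil F (K \ F) (fun i => ⟪b i, u⟫) (fun j => ⟪b j, v⟫)).trans ?_
        have hx1 := aux_proj_le b.orthonormal F u
        have hx2 := hsmall_b (K \ F) hdisj
        have hc0 : (0:ℝ) ≤ c := Nat.cast_nonneg c
        have h' : (c:ℝ) * ‖∑ i ∈ F, ⟪b i, u⟫ • b i‖ ≤ (c:ℝ) * ‖u‖ :=
          mul_le_mul_of_nonneg_left hx1 hc0
        exact mul_le_mul h' hx2 (norm_nonneg _) (by positivity)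
      have habs : |S u v K - S u v F| ≤ (c : ℝ) * δ * ‖v‖ + (c : ℝ) * ‖u‖ * δ := by
        rw [hid]
        exact (abs_add_le _ _).trans (add_le_add hA hB)
      have hfin : (c : ℝ) * δ * ‖v‖ + (c : ℝ) * ‖u‖ * δ < ε / 2 := by
        have hc0 : (0:ℝ) ≤ c := Nat.cast_nonneg c
        have hδε : 2 * ((c : ℝ) + 1) * (‖u‖ + ‖v‖ + 1) * δ = ε := by
          rw [hδdef]; field_simp
        nlinarith [norm_nonneg u, norm_nonneg v, hδ, hδε,
          mul_pos hδ (show (0:ℝ) < (c:ℝ) + ‖u‖ + ‖v‖ + 1 by positivity)]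
      exact lt_of_le_of_lt habs hfin
    refine ⟨N, fun F hF G hG => ?_⟩
    have h1 := hnest F (F ∪ G) hF Finset.subset_union_left
    have h2 := hnest G (F ∪ G) hG Finset.subset_union_right
    rw [Real.dist_eq]
    have : S u v F - S u v G
        = (S u v (F ∪ G) - S u v G) - (S u v (F ∪ G) - S u v F) := by ring
    rw [this]
    calc |_ - _| ≤ |S u v (F ∪ G) - S u v G| + |S u v (F ∪ G) - S u v F| := abs_sub _ _
      _ < ε := by linarith
  -- limits
  have hex : ∀ u v : H, ∃ L : ℝ, Filter.Tendsto (S u v) Filter.atTop (nhds L) :=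
    fun u v => cauchySeq_tendsto_of_complete (hcauchy u v)
  choose φ hφ using hex
  have hbil := aux_bil b g (c : ℝ) hc
  -- linearity in the first slot
  have hadd₁ : ∀ u u' v : H, φ (u + u') v = φ u v + φ u' v := by
    intro u u' v
    refine tendsto_nhds_unique (hφ (u + u') v) ?_
    refine (((hφ u v).add (hφ u' v)).congr fun F => ?_)
    simp only [hSdef, inner_add_right, add_mul, Finset.sum_add_distrib]
  have hsmul₁ : ∀ (r : ℝ) (u v : H), φ (r • u) v = r * φ u v := by
    intro r u v
    refine tendsto_nhds_unique (hφ (r • u) v) ?_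
    refine (((hφ u v).const_mul r).congr fun F => ?_)
    simp only [hSdef, inner_smul_right, Finset.mul_sum]
    refine Finset.sum_congr rfl fun i _ => Finset.sum_congr rfl fun j _ => by ring
  have hadd₂ : ∀ u v v' : H, φ u (v + v') = φ u v + φ u v' := by
    intro u v v'
    refine tendsto_nhds_unique (hφ u (v + v')) ?_
    refine (((hφ u v).add (hφ u v')).congr fun F => ?_)
    simp only [hSdef, inner_add_right, mul_add, add_mul, Finset.sum_add_distrib]
  have hsmul₂ : ∀ (r : ℝ) (u v : H), φ u (r • v) = r * φ u v := by
    intro r u v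
    refine tendsto_nhds_unique (hφ u (r • v)) ?_
    refine (((hφ u v).const_mul r).congr fun F => ?_)
    simp only [hSdef, inner_smul_right, Finset.mul_sum]
    refine Finset.sum_congr rfl fun i _ => Finset.sum_congr rfl fun j _ => by ring
  -- bound
  have hbound : ∀ u v : H, |φ u v| ≤ (c : ℝ) * ‖u‖ * ‖v‖ := by
    intro u v
    refine le_of_tendsto' (hφ u v).abs fun F => ?_
    refine (hbil F F (fun i => ⟪b i, u⟫) (fun j => ⟪b j, v⟫)).trans ?_
    have hc0 : (0:ℝ) ≤ c := Nat.cast_nonneg c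
    have h' : (c:ℝ) * ‖∑ i ∈ F, ⟪b i, u⟫ • b i‖ ≤ (c:ℝ) * ‖u‖ :=
      mul_le_mul_of_nonneg_left (aux_proj_le b.orthonormal F u) hc0
    exact mul_le_mul h' (aux_proj_le b.orthonormal F v) (norm_nonneg _) (by positivity)
  -- build the operator
  let φₗ : H →ₗ[ℝ] H →ₗ[ℝ] ℝ := LinearMap.mk₂ ℝ φ hadd₁ hsmul₁ hadd₂ hsmul₂
  let Φ : H →L[ℝ] H →L[ℝ] ℝ := LinearMap.mkContinuous₂ φₗ (c : ℝ)
    (fun u v => by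
      simpa [Real.norm_eq_abs, φₗ, mul_assoc] using hbound u v)
  let e : StrongDual ℝ H ≃L[ℝ] H :=
    (InnerProductSpace.toDual ℝ H).symm.toContinuousLinearEquiv
  refine ⟨(e : StrongDual ℝ H →L[ℝ] H).comp Φ, fun i j => ?_⟩
  have he : ∀ (f : StrongDual ℝ H) (x : H), ⟪e f, x⟫ = f x := by
    intro f x
    exact InnerProductSpace.toDual_symm_apply
  have h1 : ⟪(e : StrongDual ℝ H →L[ℝ] H).comp Φ (b i), b j⟫ = φ (b i) (b j) := by
    rw [ContinuousLinearMap.comp_apply]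
    exact he (Φ (b i)) (b j)
  rw [h1]
  -- eventually constant
  have hev : ∀ᶠ F in (Filter.atTop : Filter (Finset ι)), S (b i) (b j) F = g i j := by
    filter_upwards [Filter.eventually_ge_atTop ({i, j} : Finset ι)] with F hF
    have hiF : i ∈ F := hF (by simp)
    have hjF : j ∈ F := hF (by simp)
    have hrow : ∀ i' ∈ F, ∑ j' ∈ F, ⟪b i', b i⟫ * ⟪b j', b j⟫ * g i' j'
        = if i' = i then g i' j else 0 := by
      intro i' _
      by_cases hi' : i' = i
      · subst hi'
        rw [if_pos rfl]
        have : ∀ j' ∈ F, ⟪b i', b i'⟫ * ⟪b j', b j⟫ * g i' j'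
            = if j' = j then g i' j' else 0 := by
          intro j' _
          rw [orthonormal_iff_ite.mp b.orthonormal i' i',
            orthonormal_iff_ite.mp b.orthonormal j' j]
          by_cases hj' : j' = j <;> simp [hj']
        rw [Finset.sum_congr rfl this, Finset.sum_ite_eq' F j (fun j' => g i' j'),
          if_pos hjF]
      · rw [if_neg hi']
        have : ∀ j' ∈ F, ⟪b i', b i⟫ * ⟪b j', b j⟫ * g i' j' = 0 := by
          intro j' _
          rw [orthonormal_iff_ite.mp b.orthonormal i' i, if_neg hi']
          ring
        rw [Finset.sum_congr rfl this, Finset.sum_const, smul_zero]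
    calc S (b i) (b j) F = ∑ i' ∈ F, if i' = i then g i' j else 0 :=
          Finset.sum_congr rfl hrow
      _ = g i j := by rw [Finset.sum_ite_eq' F i (fun i' => g i' j), if_pos hiF]
  have hev' : (fun _ : Finset ι => g i j) =ᶠ[Filter.atTop] S (b i) (b j) :=
    (Filter.eventuallyEq_iff_exists_mem.mpr ⟨_, hev, fun F hF => hF.symm⟩ :)
  exact tendsto_nhds_unique (hφ (b i) (b j))
    (Filter.Tendsto.congr' hev' tendsto_const_nhds)
end Aux4

section Aux5
set_option linter.unusedSectionVars false
variable {H : Type*} [NormedAddCommGroup H] [InnerProductSpace ℝ H] [CompleteSpace H]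
variable {ι : Type*}

lemma aux_exists_clm_iff (b : HilbertBasis ι ℝ H) (g : ι → ι → ℝ) :
    (∃ B : H →L[ℝ] H, ∀ i j, ⟪B (b i), b j⟫ = g i j) ↔
    ∃ c : ℕ, ∀ F : Finset ι, ‖auxMatOp b g F‖ ≤ (c : ℝ) := by
  constructor
  · rintro ⟨B, hB⟩
    refine ⟨⌈‖B‖⌉₊, fun F => ?_⟩
    have hg : g = fun i j => ⟪B (b i), b j⟫ := by
      funext i j; rw [hB]
    rw [hg]
    exact (aux_matOp_norm_le b B F).trans (Nat.le_ceil _)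
  · rintro ⟨c, hc⟩
    exact aux_construct b g c hc

lemma aux_countable [TopologicalSpace.SeparableSpace H] (v : ι → H)
    (hv : Orthonormal ℝ v) : Countable ι := by
  refine Pairwise.countable_of_isOpen_disjoint
    (s := fun i => Metric.ball (v i) (1/2)) ?_ (fun i => Metric.isOpen_ball)
    (fun i => Metric.nonempty_ball.mpr (by norm_num))
  intro i j hij
  have h1 : ⟪v i, v j⟫ = 0 := hv.2 hij
  have h2 : dist (v i) (v j) ^ 2 = 2 := by
    rw [dist_eq_norm, @norm_sub_sq_real, hv.1 i, hv.1 j, h1]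
    norm_num
  have h3 : (1:ℝ)/2 + 1/2 ≤ dist (v i) (v j) := by
    nlinarith [dist_nonneg (x := v i) (y := v j)]
  exact Metric.ball_disjoint_ball h3

lemma aux_meas {α : Type*} [MeasurableSpace α] [Countable ι] (b : HilbertBasis ι ℝ H)
    (m : ι → ι → α → ℝ) (hm : ∀ i j, Measurable (m i j)) :
    MeasurableSet {x | ∃ c : ℕ, ∀ F : Finset ι,
      ‖auxMatOp b (fun i j => m i j x) F‖ ≤ (c : ℝ)} := by
  have hmeas : ∀ F : Finset ι, Measurable fun x => ‖auxMatOp b (fun i j => m i j x) F‖ := by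
    intro F
    have hcont : Continuous fun q : ι × ι → ℝ =>
        ‖∑ i ∈ F, ∑ j ∈ F, q (i, j) • ((innerSL ℝ (b i)).smulRight (b j))‖ := by
      refine Continuous.norm ?_
      refine continuous_finset_sum _ fun i _ => continuous_finset_sum _ fun j _ => ?_
      exact (continuous_apply (i, j)).smul continuous_const
    have hq : Measurable fun x => (fun ij : ι × ι => m ij.1 ij.2 x) :=
      measurable_pi_lambda _ fun ij => hm ij.1 ij.2
    have heq : (fun x => ‖auxMatOp b (fun i j => m i j x) F‖)
        = (fun q : ι × ι → ℝ =>
            ‖∑ i ∈ F, ∑ j ∈ F, q (i, j) • ((innerSL ℝ (b i)).smulRight (b j))‖) ∘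
          (fun x => (fun ij : ι × ι => m ij.1 ij.2 x)) := by
      funext x
      simp only [Function.comp_apply, auxMatOp]
    rw [heq]
    exact hcont.measurable.comp hq
  have hset : {x | ∃ c : ℕ, ∀ F : Finset ι,
        ‖auxMatOp b (fun i j => m i j x) F‖ ≤ (c : ℝ)}
      = ⋃ c : ℕ, ⋂ F : Finset ι,
        {x | ‖auxMatOp b (fun i j => m i j x) F‖ ≤ (c : ℝ)} := by
    ext x; simp
  rw [hset]
  exact MeasurableSet.iUnion fun c => MeasurableSet.iInter fun F =>
    measurableSet_le (hmeas F) measurable_const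

lemma aux_main_meas {α : Type*} [MeasurableSpace α] [Countable ι]
    (b : HilbertBasis ι ℝ H) (f : ι → ι → α → ℝ) (hf : ∀ i j, Measurable (f i j))
    (u v : H) :
    Measurable fun x => ⟪(if hx : ∃ B : H →L[ℝ] H, ∀ i j, ⟪B (b i), b j⟫ = f i j x
      then hx.choose else 0) u, v⟫ := by
  haveI : (Filter.atTop : Filter (Finset ι)).NeBot := Filter.atTop_neBot
  set E : Set α := {x | ∃ c : ℕ, ∀ F : Finset ι,
    ‖auxMatOp b (fun i j => f i j x) F‖ ≤ (c : ℝ)} with hEdef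
  have hE : MeasurableSet E := aux_meas b f hf
  have hEiff : ∀ x, x ∈ E ↔ ∃ B : H →L[ℝ] H, ∀ i j, ⟪B (b i), b j⟫ = f i j x :=
    fun x => (aux_exists_clm_iff b _).symm
  set G : α → H →L[ℝ] H := fun x =>
    if hx : ∃ B : H →L[ℝ] H, ∀ i j, ⟪B (b i), b j⟫ = f i j x then hx.choose else 0
    with hGdef
  set s : Finset ι → α → ℝ := fun F =>
    E.indicator (fun x => ∑ i ∈ F, ∑ j ∈ F, ⟪b i, u⟫ * ⟪b j, v⟫ * f i j x) with hsdef
  have hs : ∀ F, Measurable (s F) := by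
    intro F
    refine Measurable.indicator ?_ hE
    exact Finset.measurable_sum _ fun i _ =>
      Finset.measurable_sum _ fun j _ => ((hf i j).const_mul _)
  have hlim : ∀ x, Filter.Tendsto (fun F => s F x) Filter.atTop (nhds ⟪G x u, v⟫) := by
    intro x
    by_cases hx : ∃ B : H →L[ℝ] H, ∀ i j, ⟪B (b i), b j⟫ = f i j x
    · have hmem : x ∈ E := (hEiff x).mpr hx
      have hGx : ∀ i j, ⟪G x (b i), b j⟫ = f i j x := by
        simp only [hGdef, dif_pos hx]
        exact hx.choose_spec
      refine (aux_tendsto b (G x) u v).congr fun F => ?_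
      rw [hsdef]
      simp only
      rw [Set.indicator_of_mem hmem]
      exact Finset.sum_congr rfl fun i _ => Finset.sum_congr rfl fun j _ => by
        rw [hGx i j]
    · have hmem : x ∉ E := fun hmem => hx ((hEiff x).mp hmem)
      have hGx : G x = 0 := dif_neg hx
      have : ∀ F : Finset ι, s F x = 0 := fun F => Set.indicator_of_notMem hmem _
      rw [hGx]
      simp only [ContinuousLinearMap.zero_apply, inner_zero_left]
      exact tendsto_const_nhds.congr fun F => (this F).symm
  exact measurable_of_tendsto_metrizable' Filter.atTop hs
    (tendsto_pi_nhds.mpr hlim)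
end Aux5

/-- **Existence of a weakly progressively measurable modification of a weakly
adapted operator-valued process** (Lemma 2.6 of the paper). A weakly adapted
`𝔏(H)`-valued process `(Y_t)_{0≤t≤T}` with `Y_t ∈ L¹_w(𝓕_t, 𝔏(H))` has an
`𝔏(H)`-valued weakly progressively measurable modification iff, for each
`(u,v) ∈ H × H`, the scalar process `⟨Y_t u, v⟩` has a progressively measurable
modification. -/
theorem weakly_prog_measurable_modification_iff
    {Ω H : Type*} [NormedAddCommGroup H] [InnerProductSpace ℝ H] [CompleteSpace H]
    [TopologicalSpace.SeparableSpace H]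
    {m0 : MeasurableSpace Ω} (μ : Measure Ω) [IsProbabilityMeasure μ]
    (T : ℝ) (hT : 0 < T) (𝓕 : Filtration ℝ m0)
    (Y : ℝ → Ω → H →L[ℝ] H)
    (hadapted : ∀ t ∈ Icc (0 : ℝ) T, ∀ u v : H,
      Measurable[𝓕 t] fun ω => ⟪Y t ω u, v⟫)
    (hint : ∀ t ∈ Icc (0 : ℝ) T, Integrable (fun ω => ‖Y t ω‖) μ) :
    (∃ Yb : ℝ → Ω → H →L[ℝ] H,
        (∀ u v : H, ProgMeasurable 𝓕 fun t ω => ⟪Yb t ω u, v⟫) ∧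
        ∀ t ∈ Icc (0 : ℝ) T, ∀ᵐ ω ∂μ, Yb t ω = Y t ω) ↔
    (∀ u v : H, ∃ y : ℝ → Ω → ℝ, ProgMeasurable 𝓕 y ∧
        ∀ t ∈ Icc (0 : ℝ) T, ∀ᵐ ω ∂μ, y t ω = ⟪Y t ω u, v⟫) := by
  constructor
  · rintro ⟨Yb, hprog, hmod⟩ u v
    exact ⟨fun t ω => ⟪Yb t ω u, v⟫, hprog u v,
      fun t ht => (hmod t ht).mono fun ω hω => by simp only [hω]⟩
  · intro h
    obtain ⟨w, b, hb⟩ := exists_hilbertBasis ℝ H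
    haveI : Countable w := aux_countable (⇑b) b.orthonormal
    choose y hyprog hymod using fun p : w × w => h (b p.1) (b p.2)
    refine ⟨fun t ω =>
      if hx : ∃ B : H →L[ℝ] H, ∀ i j : w, ⟪B (b i), b j⟫ = y (i, j) t ω
      then hx.choose else 0, ?_, ?_⟩
    · intro u v s
      apply Measurable.stronglyMeasurable
      exact @aux_main_meas H _ _ _ (↥w) (↥(Set.Iic s) × Ω)
        (Subtype.instMeasurableSpace.prod (𝓕 s)) _ b
        (fun i j p => y (i, j) p.1 p.2)
        (fun i j => ((hyprog (i, j)) s).measurable) u v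
    · intro t ht
      have hae : ∀ᵐ ω ∂μ, ∀ p : w × w, y p t ω = ⟪Y t ω (b p.1), b p.2⟫ :=
        ae_all_iff.mpr fun p => hymod p t ht
      filter_upwards [hae] with ω hω
      have hex : ∃ B : H →L[ℝ] H, ∀ i j : w, ⟪B (b i), b j⟫ = y (i, j) t ω :=
        ⟨Y t ω, fun i j => (hω (i, j)).symm⟩
      rw [dif_pos hex]
      exact aux_unique b _ _ fun i j => (hex.choose_spec i j).trans (hω (i, j))
end
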